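/- arXiv:1111.3093 — 3 statements merged into one kernel-verified Lean document; each statement's English description precedes it below -/
import Mathlib

section
/- Let p be a prime and let f : ℤ_p → ℤ_p be a 1-Lipschitz function. Then f preserves the normalized Haar probability measure μ_p on ℤ_p (i.e., μ_p(f⁻¹(S)) = μ_p(S) for every measurable S ⊆ ℤ_p) if and only if f is bijective modulo p^k for every k ≥ 1. -/
/-!
Reduction modulo `p ^ k` semiconjugates a 1-Lipschitz `f` to `inducedMod f k`, so `f` pulls each
residue class `c + p ^ k ℤ_[p]` (a ball of measure `p ^ (-k)`) back to the union of the classes in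
the fibre of `inducedMod f k` over `c`, whose measure is `p ^ (-k)` times the size of that fibre.
Hence `f` preserves the measure of every residue class iff every `inducedMod f k` is bijective.
The residue classes are a π-system generating the Borel σ-algebra, so preserving their measures is
the same as preserving `μ`.
-/

open MeasureTheory

/-- The map induced by `f : ℤ_[p] → ℤ_[p]` on `ℤ/p^kℤ` (for 1-Lipschitz `f` this is the
well-defined reduction of `f` modulo `p^k`). -/
noncomputable def inducedMod {p : ℕ} [Fact p.Prime] (f : ℤ_[p] → ℤ_[p]) (k : ℕ) :
    ZMod (p ^ k) → ZMod (p ^ k) :=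
  fun z => PadicInt.toZModPow k (f ((z.val : ℤ_[p])))

open Function Set Topology TopologicalSpace
open scoped ENNReal

section UniformFibers

variable {α β : Type*} [MeasurableSpace α] {μ : Measure α} {e : α → β} {q : ℝ≥0∞}

theorem measure_preimage_finset_of_measure_fiber (he : ∀ b, MeasurableSet (e ⁻¹' {b}))
    (hq : ∀ b, μ (e ⁻¹' {b}) = q) (T : Finset β) : μ (e ⁻¹' T) = T.card * q := by
  rw [← sum_measure_preimage_singleton T fun b _ => he b]
  simp [hq]

theorem measure_preimage_fiber_eq_iff_bijective [Fintype β] [DecidableEq β]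
    (he : ∀ b, MeasurableSet (e ⁻¹' {b})) (hq : ∀ b, μ (e ⁻¹' {b}) = q) (hq₀ : q ≠ 0)
    (hq_top : q ≠ ∞) (g : β → β) :
    (∀ b, μ (e ⁻¹' (g ⁻¹' {b})) = μ (e ⁻¹' {b})) ↔ Bijective g := by
  have hcard (b : β) :
      μ (e ⁻¹' (g ⁻¹' {b})) = (Finset.univ.filter (g · = b)).card * q := by
    rw [← measure_preimage_finset_of_measure_fiber he hq, Finset.coe_filter_univ]
    rfl
  simp only [hcard, hq, ENNReal.mul_eq_right hq₀ hq_top, Nat.cast_eq_one,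
    Finset.card_eq_one_iff_existsUnique, Finset.mem_filter_univ, bijective_iff_existsUnique]

end UniformFibers

namespace PadicInt

variable {p : ℕ} [hp : Fact p.Prime]

theorem toZModPow_eq_iff_norm_sub_le {k : ℕ} {x y : ℤ_[p]} :
    toZModPow k x = toZModPow k y ↔ ‖x - y‖ ≤ (p : ℝ) ^ (-(k : ℤ)) := by
  rw [norm_le_pow_iff_mem_span_pow, ← ker_toZModPow, RingHom.mem_ker, map_sub, sub_eq_zero]

theorem toZModPow_natCast_val (k : ℕ) (c : ZMod (p ^ k)) : toZModPow k (c.val : ℤ_[p]) = c := by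
  have : NeZero (p ^ k) := ⟨pow_ne_zero k hp.out.ne_zero⟩
  rw [map_natCast, ZMod.natCast_zmod_val]

theorem preimage_toZModPow_singleton (k : ℕ) (x : ℤ_[p]) :
    toZModPow k ⁻¹' {toZModPow k x} = {y | ‖y - x‖ ≤ (p : ℝ) ^ (-(k : ℤ))} :=
  Set.ext fun _ => toZModPow_eq_iff_norm_sub_le

theorem isOpen_preimage_toZModPow_singleton (k : ℕ) (c : ZMod (p ^ k)) :
    IsOpen (toZModPow k ⁻¹' {c} : Set ℤ_[p]) := by
  rw [← toZModPow_natCast_val k c, preimage_toZModPow_singleton]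
  exact IsUltrametricDist.isOpen_closedBall _ (zpow_ne_zero _ (mod_cast hp.out.ne_zero))

theorem preimage_toZModPow_singleton_subset {k l : ℕ} (hkl : k ≤ l) (d : ZMod (p ^ l)) :
    (toZModPow l ⁻¹' {d} : Set ℤ_[p]) ⊆ toZModPow k ⁻¹' {ZMod.cast d} := by
  rintro x rfl
  exact (cast_toZModPow k l hkl x).symm

theorem preimage_toZModPow_zero (c : ZMod (p ^ 0)) :
    (toZModPow 0 ⁻¹' {c} : Set ℤ_[p]) = univ :=
  eq_univ_of_forall fun _ => Subsingleton.elim (α := ZMod 1) _ _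

/-- The residue classes `x + p ^ k ℤ_[p]`, i.e. the closed balls of `ℤ_[p]`. -/
def residueClasses (p : ℕ) [Fact p.Prime] : Set (Set ℤ_[p]) :=
  {s | ∃ (k : ℕ) (c : ZMod (p ^ k)), s = toZModPow k ⁻¹' {c}}

theorem isTopologicalBasis_residueClasses : IsTopologicalBasis (residueClasses p) := by
  refine isTopologicalBasis_of_isOpen_of_nhds ?_ fun x U hxU hU => ?_
  · rintro _ ⟨k, c, rfl⟩
    exact isOpen_preimage_toZModPow_singleton k c
  obtain ⟨ε, hε, hball⟩ := Metric.isOpen_iff.mp hU x hxU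
  obtain ⟨k, hk⟩ := exists_pow_neg_lt p hε
  refine ⟨_, ⟨k, toZModPow k x, rfl⟩, rfl, fun y hy => hball ?_⟩
  rw [Metric.mem_ball, dist_eq_norm]
  exact (toZModPow_eq_iff_norm_sub_le.mp hy).trans_lt hk

theorem isPiSystem_residueClasses : IsPiSystem (residueClasses p) := by
  have key {k l : ℕ} (hkl : k ≤ l) (c : ZMod (p ^ k)) (d : ZMod (p ^ l))
      (hne : (toZModPow k ⁻¹' {c} ∩ toZModPow l ⁻¹' {d} : Set ℤ_[p]).Nonempty) :
      toZModPow k ⁻¹' {c} ∩ toZModPow l ⁻¹' {d} ∈ residueClasses p := by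
    obtain ⟨x, hxc, hxd⟩ := hne
    have hc : c = ZMod.cast d := hxc.symm.trans (preimage_toZModPow_singleton_subset hkl d hxd)
    rw [hc, inter_eq_right.mpr (preimage_toZModPow_singleton_subset hkl d)]
    exact ⟨l, d, rfl⟩
  rintro _ ⟨k, c, rfl⟩ _ ⟨l, d, rfl⟩ hne
  rcases le_total k l with hkl | hlk
  · exact key hkl c d hne
  · rw [inter_comm] at hne ⊢
    exact key hlk d c hne

theorem measurableSet_preimage_toZModPow_singleton [MeasurableSpace ℤ_[p]] [BorelSpace ℤ_[p]]
    (k : ℕ) (c : ZMod (p ^ k)) : MeasurableSet (toZModPow k ⁻¹' {c} : Set ℤ_[p]) :=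
  (isOpen_preimage_toZModPow_singleton k c).measurableSet

theorem measure_ext_of_residueClasses [MeasurableSpace ℤ_[p]] [BorelSpace ℤ_[p]]
    {μ ν : Measure ℤ_[p]} [IsFiniteMeasure μ]
    (h : ∀ (k : ℕ) (c : ZMod (p ^ k)),
      μ (toZModPow k ⁻¹' {c}) = ν (toZModPow k ⁻¹' {c})) :
    μ = ν := by
  refine ext_of_generate_finite _ ?_ isPiSystem_residueClasses ?_ ?_
  · rw [BorelSpace.measurable_eq (α := ℤ_[p]),
      isTopologicalBasis_residueClasses.borel_eq_generateFrom]
  · rintro _ ⟨k, c, rfl⟩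
    exact h k c
  · simpa only [preimage_toZModPow_zero] using h 0 0

end PadicInt

open PadicInt

section Lipschitz

variable {p : ℕ} [Fact p.Prime] {f : ℤ_[p] → ℤ_[p]}

theorem toZModPow_comp_eq_inducedMod_comp (hf : ∀ a b : ℤ_[p], ‖f a - f b‖ ≤ ‖a - b‖)
    (k : ℕ) : toZModPow k ∘ f = inducedMod f k ∘ toZModPow k := by
  funext x
  refine toZModPow_eq_iff_norm_sub_le.mpr ((hf _ _).trans ?_)
  exact toZModPow_eq_iff_norm_sub_le.mp (toZModPow_natCast_val k _).symm

theorem measure_preimage_residueClass_eq_iff_bijective [MeasurableSpace ℤ_[p]]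
    [BorelSpace ℤ_[p]] {μ : Measure ℤ_[p]}
    (hμ : ∀ (k : ℕ) (c : ZMod (p ^ k)),
      μ (toZModPow k ⁻¹' {c}) = ((p : ℝ≥0∞) ^ k)⁻¹)
    (hf : ∀ a b : ℤ_[p], ‖f a - f b‖ ≤ ‖a - b‖) (k : ℕ) :
    (∀ c, μ (f ⁻¹' (toZModPow k ⁻¹' {c})) = μ (toZModPow k ⁻¹' {c})) ↔
      Bijective (inducedMod f k) := by
  simp only [← preimage_comp, toZModPow_comp_eq_inducedMod_comp hf k]
  exact measure_preimage_fiber_eq_iff_bijective (measurableSet_preimage_toZModPow_singleton k)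
    (hμ k) (by simp) (by simp [(Fact.out : p.Prime).ne_zero]) _

end Lipschitz

/-- A 1-Lipschitz function `f : ℤ_p → ℤ_p` preserves the normalized Haar probability measure
`μ_p` (which assigns measure `p^{-k}` to every ball `a + p^k ℤ_p`) if and only if `f` is
bijective modulo `p^k` for every `k ≥ 1`. -/
theorem measurePreserving_iff_bijective_mod
    (p : ℕ) [Fact p.Prime] [MeasurableSpace ℤ_[p]] [BorelSpace ℤ_[p]]
    (μ : Measure ℤ_[p])
    (hμ : ∀ (a : ℤ_[p]) (k : ℕ),
      μ {x : ℤ_[p] | ‖x - a‖ ≤ (p : ℝ) ^ (-(k : ℤ))} = ((p : ENNReal) ^ k)⁻¹)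
    (f : ℤ_[p] → ℤ_[p]) (hf : ∀ a b : ℤ_[p], ‖f a - f b‖ ≤ ‖a - b‖) :
    (∀ S : Set ℤ_[p], MeasurableSet S → μ (f ⁻¹' S) = μ S) ↔
      ∀ k : ℕ, 1 ≤ k → Function.Bijective (inducedMod f k) := by
  have hμ' (k : ℕ) (c : ZMod (p ^ k)) :
      μ (toZModPow k ⁻¹' {c}) = ((p : ℝ≥0∞) ^ k)⁻¹ := by
    rw [← toZModPow_natCast_val k c, preimage_toZModPow_singleton]
    exact hμ _ k
  have hclass := measure_preimage_residueClass_eq_iff_bijective hμ' hf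
  refine ⟨fun hpres k _ => (hclass k).mp fun c =>
    hpres _ (measurableSet_preimage_toZModPow_singleton k c), fun hbij => ?_⟩
  have hf_meas : Measurable f := (LipschitzWith.of_dist_le_mul (K := 1) fun a b => by
    simpa [dist_eq_norm] using hf a b).continuous.measurable
  have : IsProbabilityMeasure μ := ⟨by rw [← preimage_toZModPow_zero 0, hμ' 0 0]; simp⟩
  have hmap : μ.map f = μ := measure_ext_of_residueClasses fun k c => by
    rw [Measure.map_apply hf_meas (measurableSet_preimage_toZModPow_singleton k c)]
    rcases k.eq_zero_or_pos with rfl | hk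
    · simp only [preimage_toZModPow_zero, preimage_univ]
    · exact (hclass k).mpr (hbij k hk) c
  intro S hS
  rw [← Measure.map_apply hf_meas hS, hmap]
end

section
/- Let p be a prime and let f : ℤ_p → ℤ_p be the continuous function represented by a Mahler interpolation series f(x) = Σ_{i=0}^∞ a_i·C(x,i), where a_i ∈ ℤ_p and a_i → 0 p-adically. Then f is 1-Lipschitz (compatible) if and only if a_i ≡ 0 (mod p^{⌊log_p i⌋}) for all i ≥ 2, i.e., |a_i|_p ≤ p^{−⌊log_p i⌋} for all i ≥ 2. -/
/-!
The Mahler coefficients are `a n = Δⁿ f 0`. From `k C(x, k) = x C(x - 1, k - 1)` one gets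
`|C(x, k)| ≤ |x| / |k| ≤ p^{⌊log_p k⌋} |x|`, so by Vandermonde `C(·, i)` is
`p^{⌊log_p i⌋}`-Lipschitz and the coefficient bound makes every term of the series 1-Lipschitz.
Conversely, write `n = q + r` with `q = p^{⌊log_p n⌋}` and apply the Gregory–Newton formula to
`g = Δʳ f`: `Δ^q g y = g (y + q) - g y - Σ_{0<k<q} C(q, k) Δᵏ g y`. The first difference has norm
at most `|q| = p^{-⌊log_p n⌋}` because `f` is 1-Lipschitz, and by induction each remaining term has
norm at most `|C(q, k)| |k| ≤ |q|`.
-/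

open Filter Finset IsUltrametricDist
open scoped fwdDiff

section fwdDiff

variable {M G : Type*} [AddCommMonoid M] [AddCommGroup G]

lemma fwdDiff_iter_eq_sub_sub_sum (h : M) (f : M → G) {n : ℕ} (hn : n ≠ 0) (y : M) :
    Δ_[h] ^[n] f y = (f (y + n • h) - f y) - ∑ k ∈ Ico 1 n, n.choose k • Δ_[h] ^[k] f y := by
  rw [shift_eq_sum_fwdDiff_iter h f n y, sum_range_succ, range_eq_Ico,
    sum_eq_sum_Ico_succ_bot (Nat.pos_of_ne_zero hn)]
  simp only [Nat.choose_zero_right, Nat.choose_self, Function.iterate_zero_apply, one_smul]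
  abel

lemma fwdDiff_iter_sub_apply (h : M) (f g : M → G) (n : ℕ) (y : M) :
    Δ_[h] ^[n] (f - g) y = Δ_[h] ^[n] f y - Δ_[h] ^[n] g y := by
  simp only [fwdDiff_iter_eq_sum_shift, Pi.sub_apply, smul_sub, sum_sub_distrib]

end fwdDiff

namespace IsUltrametricDist

variable {M G : Type*} [SeminormedAddCommGroup G] [IsUltrametricDist G]

lemma norm_fwdDiff_iter_apply_le_of_forall_le [AddCommMonoid M] (h : M) {f : M → G} {C : ℝ}
    (hf : ∀ x, ‖f x‖ ≤ C) (n : ℕ) (y : M) : ‖Δ_[h] ^[n] f y‖ ≤ C := by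
  rw [fwdDiff_iter_eq_sum_shift]
  exact norm_sum_le_of_forall_le_of_nonneg ((norm_nonneg _).trans (hf 0))
    fun k _ ↦ (norm_zsmul_le _ _).trans (hf _)

lemma norm_fwdDiff_iter_apply_add_sub_le [SeminormedAddCommGroup M] {f : M → G}
    (hf : ∀ x y, ‖f x - f y‖ ≤ ‖x - y‖) (h c : M) (n : ℕ) (y : M) :
    ‖Δ_[h] ^[n] f (y + c) - Δ_[h] ^[n] f y‖ ≤ ‖c‖ := by
  rw [← fwdDiff_iter_comp_add, ← fwdDiff_iter_sub_apply]
  refine norm_fwdDiff_iter_apply_le_of_forall_le h (fun x ↦ ?_) n y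
  simpa using hf (x + c) x

end IsUltrametricDist

namespace PadicInt

variable {p : ℕ} [hp : Fact p.Prime]

lemma zpow_neg_log_le_norm_natCast {k : ℕ} (hk : k ≠ 0) :
    (p : ℝ) ^ (-(Nat.log p k : ℤ)) ≤ ‖(k : ℤ_[p])‖ := by
  rw [norm_def, coe_natCast, Padic.norm_eq_zpow_neg_valuation (by exact_mod_cast hk),
    Padic.valuation_natCast]
  exact zpow_le_zpow_right₀ (by exact_mod_cast hp.out.one_le)
    (by simpa using padicValNat_le_nat_log k)

lemma norm_natCast_mul_choose_le (x : ℤ_[p]) (k : ℕ) :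
    ‖(k : ℤ_[p]) * Ring.choose x k‖ ≤ ‖x‖ := by
  rcases Nat.eq_zero_or_pos k with rfl | hk
  · simp
  have h := Ring.choose_smul_choose x hk
  rw [Nat.choose_one_right, Ring.choose_one_right, nsmul_eq_mul] at h
  rw [h, norm_mul]
  exact mul_le_of_le_one_right (norm_nonneg _) (norm_le_one _)

lemma norm_choose_le {k : ℕ} (hk : k ≠ 0) (x : ℤ_[p]) :
    ‖Ring.choose x k‖ ≤ (p : ℝ) ^ (Nat.log p k : ℤ) * ‖x‖ := by
  have h : (p : ℝ) ^ (-(Nat.log p k : ℤ)) * ‖Ring.choose x k‖ ≤ ‖x‖ :=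
    (mul_le_mul_of_nonneg_right (zpow_neg_log_le_norm_natCast hk) (norm_nonneg _)).trans
      ((norm_mul _ _).symm.trans_le (norm_natCast_mul_choose_le x k))
  rwa [zpow_neg, inv_mul_le_iff₀ (zpow_pos (by exact_mod_cast hp.out.pos) _)] at h

lemma norm_choose_sub_choose_le (x y : ℤ_[p]) (n : ℕ) :
    ‖Ring.choose x n - Ring.choose y n‖ ≤ (p : ℝ) ^ (Nat.log p n : ℤ) * ‖x - y‖ := by
  have hvandermonde : Ring.choose x n - Ring.choose y n =
      ∑ k ∈ range n, Ring.choose (x - y) (k + 1) * Ring.choose y (n - (k + 1)) := by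
    conv_lhs => rw [← sub_add_cancel x y, Ring.add_choose_eq n (Commute.all _ _),
      Nat.sum_antidiagonal_eq_sum_range_succ_mk, sum_range_succ']
    simp
  rw [hvandermonde]
  refine norm_sum_le_of_forall_le_of_nonneg (by positivity) fun k hk ↦ ?_
  calc ‖Ring.choose (x - y) (k + 1) * Ring.choose y (n - (k + 1))‖
      ≤ ‖Ring.choose (x - y) (k + 1)‖ := by
        rw [norm_mul]; exact mul_le_of_le_one_right (norm_nonneg _) (norm_le_one _)
    _ ≤ (p : ℝ) ^ (Nat.log p (k + 1) : ℤ) * ‖x - y‖ := norm_choose_le k.succ_ne_zero _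
    _ ≤ (p : ℝ) ^ (Nat.log p n : ℤ) * ‖x - y‖ := by
        gcongr
        · exact_mod_cast hp.out.one_le
        · exact mem_range.mp hk


theorem norm_fwdDiff_iter_apply_le {f : ℤ_[p] → ℤ_[p]} (hf : ∀ x y, ‖f x - f y‖ ≤ ‖x - y‖)
    (n : ℕ) (y : ℤ_[p]) : ‖Δ_[1] ^[n] f y‖ ≤ (p : ℝ) ^ (-(Nat.log p n : ℤ)) := by
  induction n using Nat.strong_induction_on generalizing y with
  | _ n ih =>
  rcases eq_or_ne n 0 with rfl | hn
  · simpa using norm_le_one (f y)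
  set q := p ^ Nat.log p n with hq
  have hq0 : q ≠ 0 := pow_ne_zero _ hp.out.ne_zero
  have hqn : q ≤ n := Nat.pow_log_le_self p hn
  have hnorm_q : ‖(q : ℤ_[p])‖ = (p : ℝ) ^ (-(Nat.log p n : ℤ)) := by simp [hq]
  have hsplit : Δ_[1] ^[n] f y = Δ_[1] ^[q] (Δ_[1] ^[n - q] f) y := by
    rw [← Function.iterate_add_apply, Nat.add_sub_cancel' hqn]
  rw [hsplit, fwdDiff_iter_eq_sub_sub_sum 1 _ hq0 y, sub_eq_add_neg]
  refine (norm_add_le_max _ _).trans (max_le ?_ ?_)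
  · rw [← hnorm_q, ← nsmul_one]
    exact norm_fwdDiff_iter_apply_add_sub_le hf 1 _ _ y
  rw [norm_neg]
  refine norm_sum_le_of_forall_le_of_nonneg (by positivity) fun k hk ↦ ?_
  obtain ⟨hk1, hkq⟩ := mem_Ico.mp hk
  have hdiff : ‖Δ_[1] ^[k + (n - q)] f y‖ ≤ ‖(k : ℤ_[p])‖ :=
    calc ‖Δ_[1] ^[k + (n - q)] f y‖
        ≤ (p : ℝ) ^ (-(Nat.log p (k + (n - q)) : ℤ)) := ih _ (by omega) y
      _ ≤ (p : ℝ) ^ (-(Nat.log p k : ℤ)) := by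
        gcongr
        · exact_mod_cast hp.out.one_le
        · omega
      _ ≤ ‖(k : ℤ_[p])‖ := zpow_neg_log_le_norm_natCast (by omega)
  calc ‖q.choose k • Δ_[1] ^[k] (Δ_[1] ^[n - q] f) y‖
      = ‖(q.choose k : ℤ_[p])‖ * ‖Δ_[1] ^[k + (n - q)] f y‖ := by
        rw [nsmul_eq_mul, norm_mul, Function.iterate_add_apply]
    _ ≤ ‖(k : ℤ_[p]) * Ring.choose (q : ℤ_[p]) k‖ := by
        rw [Ring.choose_natCast, norm_mul, mul_comm]
        gcongr
    _ ≤ (p : ℝ) ^ (-(Nat.log p n : ℤ)) := hnorm_q ▸ norm_natCast_mul_choose_le _ _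

lemma fwdDiff_iter_apply_zero_of_eq_tsum {a : ℕ → ℤ_[p]} (ha : Tendsto a atTop (nhds 0))
    {f : ℤ_[p] → ℤ_[p]} (hf : ∀ x, f x = ∑' i, a i * Ring.choose x i) (n : ℕ) :
    Δ_[1] ^[n] f 0 = a n := by
  have hmahler : f = mahlerSeries a := funext fun x ↦ by
    simp only [hf, mahlerSeries_apply ha, mahler_apply, smul_eq_mul, mul_comm]
  rw [hmahler]
  exact fwdDiff_mahlerSeries ha n

lemma summable_mul_choose {a : ℕ → ℤ_[p]} (ha : Tendsto a atTop (nhds 0)) (x : ℤ_[p]) :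
    Summable fun i ↦ a i * Ring.choose x i := by
  refine NonarchimedeanAddGroup.summable_of_tendsto_cofinite_zero ?_
  rw [Nat.cofinite_eq_atTop]
  refine squeeze_zero_norm (fun i ↦ ?_) (tendsto_zero_iff_norm_tendsto_zero.mp ha)
  rw [norm_mul]
  exact mul_le_of_le_one_right (norm_nonneg _) (norm_le_one _)

lemma norm_tsum_mul_choose_sub_le {a : ℕ → ℤ_[p]} (ha : Tendsto a atTop (nhds 0))
    (hbound : ∀ i, ‖a i‖ ≤ (p : ℝ) ^ (-(Nat.log p i : ℤ))) (x y : ℤ_[p]) :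
    ‖∑' i, a i * Ring.choose x i - ∑' i, a i * Ring.choose y i‖ ≤ ‖x - y‖ := by
  rw [← (summable_mul_choose ha x).tsum_sub (summable_mul_choose ha y)]
  refine norm_tsum_le_of_forall_le_of_nonneg (norm_nonneg _) fun i ↦ ?_
  have hp0 : (p : ℝ) ≠ 0 := by exact_mod_cast hp.out.ne_zero
  calc ‖a i * Ring.choose x i - a i * Ring.choose y i‖
      = ‖a i‖ * ‖Ring.choose x i - Ring.choose y i‖ := by rw [← mul_sub, norm_mul]
    _ ≤ (p : ℝ) ^ (-(Nat.log p i : ℤ)) * ((p : ℝ) ^ (Nat.log p i : ℤ) * ‖x - y‖) := by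
        gcongr
        · exact hbound i
        · exact norm_choose_sub_choose_le x y i
    _ = ‖x - y‖ := by rw [← mul_assoc, ← zpow_add₀ hp0, neg_add_cancel, zpow_zero, one_mul]

end PadicInt

/-- **Compatibility criterion in terms of Mahler coefficients.** A continuous function
`f : ℤ_p → ℤ_p` given by a Mahler series `f x = Σ' i, a i * C(x, i)` (with `a i → 0`
p-adically; `C(x,i) = Ring.choose x i` is the `i`-th binomial coefficient polynomial) is
1-Lipschitz (compatible) if and only if `‖a i‖ ≤ p^{-⌊log_p i⌋}` for every `i ≥ 2`. -/
theorem mahler_compatibility_criterion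
    (p : ℕ) [Fact p.Prime]
    (a : ℕ → ℤ_[p]) (ha : Tendsto a atTop (nhds 0))
    (f : ℤ_[p] → ℤ_[p]) (hf : ∀ x : ℤ_[p], f x = ∑' i : ℕ, a i * Ring.choose x i) :
    (∀ x y : ℤ_[p], ‖f x - f y‖ ≤ ‖x - y‖) ↔
      ∀ i : ℕ, 2 ≤ i → ‖a i‖ ≤ (p : ℝ) ^ (-(Nat.log p i : ℤ)) := by
  constructor
  · intro hlip i _
    rw [← PadicInt.fwdDiff_iter_apply_zero_of_eq_tsum ha hf i]
    exact PadicInt.norm_fwdDiff_iter_apply_le hlip i 0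
  · intro hbound x y
    have hcoeff : ∀ i, ‖a i‖ ≤ (p : ℝ) ^ (-(Nat.log p i : ℤ)) := fun i ↦ by
      rcases le_or_gt 2 i with hi | hi
      · exact hbound i hi
      · rw [Nat.log_of_lt (hi.trans_le (Fact.out : p.Prime).two_le)]
        simpa using PadicInt.norm_le_one (a i)
    rw [hf x, hf y]
    exact PadicInt.norm_tsum_mul_choose_sub_le ha hcoeff x y
end

section
/- Let p be a prime and let f : ℤ_p → ℤ_p be the continuous function represented by its van der Put series f(x) = Σ_{m=0}^∞ B_m·χ(m,x), where B_m ∈ ℤ_p and B_m → 0 p-adically. Then f is 1-Lipschitz (compatible) if and only if |B_m|_p ≤ p^{−⌊log_p m⌋} for all m = 0, 1, 2, …; equivalently, f is 1-Lipschitz if and only if it can be represented as f(x) = Σ_{m=0}^∞ p^{⌊log_p m⌋}·b_m·χ(m,x) for suitable b_m ∈ ℤ_p. -/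
open Filter

/-- The van der Put characteristic function `χ(m,·)`: the characteristic function (with values
in `{0,1} ⊆ ℤ_p`) of the ball `m + p^{⌊log_p m⌋+1}ℤ_p`, with the convention `⌊log_p 0⌋ = 0`. -/
noncomputable def vdpChi (p : ℕ) [Fact p.Prime] (m : ℕ) (x : ℤ_[p]) : ℤ_[p] :=
  if ‖x - (m : ℤ_[p])‖ ≤ (p : ℝ) ^ (-((Nat.log p m : ℤ) + 1)) then 1 else 0

/-!
Sufficiency: `χ(m,·)` is constant on balls of radius `p^{-(⌊log_p m⌋+1)}`, so a term
`B_m χ(m,·)` with `‖B_m‖ ≤ p^{-⌊log_p m⌋}` is 1-Lipschitz, and by the ultrametric inequality so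
is the whole series.

Necessity: for `⌊log_p m⌋ = s ≥ 1` the natural numbers `m` and `m mod p^s` are separated by
exactly one of the functions `χ(k,·)`, namely `χ(m,·)`; hence `B_m = f(m) - f(m mod p^s)`, and
`‖m - m mod p^s‖ ≤ p^{-s}`.
-/

namespace PadicInt

variable {p : ℕ} [Fact p.Prime]

theorem summable_mul_of_tendsto_zero {C : ℕ → ℤ_[p]} (hC : Tendsto C atTop (nhds 0))
    (g : ℕ → ℤ_[p]) : Summable fun m => C m * g m := by
  apply NonarchimedeanAddGroup.summable_of_tendsto_cofinite_zero
  rw [Nat.cofinite_eq_atTop, tendsto_zero_iff_norm_tendsto_zero]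
  refine squeeze_zero (fun _ => norm_nonneg _) (fun m => ?_)
    (tendsto_zero_iff_norm_tendsto_zero.1 hC)
  rw [norm_mul]
  exact mul_le_of_le_one_right (norm_nonneg _) (norm_le_one _)

theorem tendsto_pow_neg_log_atTop :
    Tendsto (fun m : ℕ => (p : ℝ) ^ (-(Nat.log p m : ℤ))) atTop (nhds 0) := by
  have hp : 1 < p := (Fact.out : p.Prime).one_lt
  have hlog : Tendsto (Nat.log p) atTop atTop :=
    tendsto_atTop_atTop.2 fun b => ⟨p ^ b, fun a ha => by
      simpa [Nat.log_pow hp] using Nat.log_mono_right (b := p) ha⟩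
  have hpow : Tendsto (fun n : ℕ => ((p : ℝ)⁻¹) ^ n) atTop (nhds 0) :=
    tendsto_pow_atTop_nhds_zero_of_lt_one (by positivity)
      (inv_lt_one_of_one_lt₀ (by exact_mod_cast hp))
  simpa [Function.comp_def, zpow_neg, inv_pow] using hpow.comp hlog

theorem norm_natCast_sub_mod_pow_le (m s : ℕ) :
    ‖(m : ℤ_[p]) - ((m % p ^ s : ℕ) : ℤ_[p])‖ ≤ (p : ℝ) ^ (-(s : ℤ)) := by
  have hdiv : (m : ℤ_[p]) - ((m % p ^ s : ℕ) : ℤ_[p]) =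
      (p : ℤ_[p]) ^ s * ((m / p ^ s : ℕ) : ℤ_[p]) := by
    rw [sub_eq_iff_eq_add]
    exact_mod_cast (Nat.div_add_mod m (p ^ s)).symm
  rw [hdiv, norm_mul, norm_p_pow]
  exact mul_le_of_le_one_right (by positivity) (norm_le_one _)

end PadicInt

open PadicInt

section vdpChi

variable {p : ℕ} [Fact p.Prime]

theorem vdpChi_eq_of_norm_sub_le (m : ℕ) {a b : ℤ_[p]}
    (h : ‖a - b‖ ≤ (p : ℝ) ^ (-((Nat.log p m : ℤ) + 1))) :
    vdpChi p m a = vdpChi p m b := by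
  have key : ∀ {x y : ℤ_[p]}, ‖x - y‖ ≤ (p : ℝ) ^ (-((Nat.log p m : ℤ) + 1)) →
      ‖x - m‖ ≤ (p : ℝ) ^ (-((Nat.log p m : ℤ) + 1)) →
      ‖y - m‖ ≤ (p : ℝ) ^ (-((Nat.log p m : ℤ) + 1)) := fun {x y} hxy hx => by
    rw [← sub_add_sub_cancel y x m]
    exact (PadicInt.nonarchimedean _ _).trans (max_le (by rwa [norm_sub_rev]) hx)
  unfold vdpChi
  exact if_congr ⟨key h, key (by rwa [norm_sub_rev])⟩ rfl rfl

theorem norm_mul_vdpChi_sub_le {c : ℤ_[p]} {m : ℕ} (hc : ‖c‖ ≤ (p : ℝ) ^ (-(Nat.log p m : ℤ)))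
    (a b : ℤ_[p]) : ‖c * vdpChi p m a - c * vdpChi p m b‖ ≤ ‖a - b‖ := by
  by_cases hab : vdpChi p m a = vdpChi p m b
  · simp [hab]
  have hfar : (p : ℝ) ^ (-(Nat.log p m : ℤ)) ≤ ‖a - b‖ := by
    by_contra! hnear
    rw [norm_lt_pow_iff_norm_le_pow_sub_one, ← neg_add'] at hnear
    exact hab (vdpChi_eq_of_norm_sub_le m hnear)
  calc ‖c * vdpChi p m a - c * vdpChi p m b‖
      = ‖c‖ * ‖vdpChi p m a - vdpChi p m b‖ := by rw [← mul_sub, norm_mul]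
    _ ≤ ‖c‖ := mul_le_of_le_one_right (norm_nonneg _) (norm_le_one _)
    _ ≤ ‖a - b‖ := hc.trans hfar

theorem vdpChi_natCast (k n : ℕ) :
    vdpChi p k n = if n % p ^ (Nat.log p k + 1) = k then 1 else 0 := by
  have hk : k % p ^ (Nat.log p k + 1) = k :=
    Nat.mod_eq_of_lt (Nat.lt_pow_succ_log_self (Fact.out : p.Prime).one_lt k)
  unfold vdpChi
  refine if_congr ?_ rfl rfl
  rw [show (n : ℤ_[p]) - k = ((n - k : ℤ) : ℤ_[p]) by push_cast; rfl,
    show -((Nat.log p k : ℤ) + 1) = -((Nat.log p k + 1 : ℕ) : ℤ) by push_cast; rfl,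
    norm_int_le_pow_iff_dvd, ← Int.natCast_pow, ← Nat.modEq_iff_dvd, Nat.ModEq, hk, eq_comm]

theorem vdpChi_self (m : ℕ) : vdpChi p m (m : ℤ_[p]) = 1 := by
  simp [vdpChi_natCast, Nat.mod_eq_of_lt (Nat.lt_pow_succ_log_self (Fact.out : p.Prime).one_lt m)]

theorem vdpChi_natCast_mod_pow_log {k m : ℕ} (hkm : k ≠ m) (hm : 0 < Nat.log p m) :
    vdpChi p k ((m % p ^ Nat.log p m : ℕ) : ℤ_[p]) = vdpChi p k m := by
  have hp : 1 < p := (Fact.out : p.Prime).one_lt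
  rw [vdpChi_natCast, vdpChi_natCast]
  refine if_congr ?_ rfl rfl
  rcases le_or_gt (Nat.log p k + 1) (Nat.log p m) with hkm_log | hmk_log
  · rw [Nat.mod_mod_of_dvd _ (pow_dvd_pow p hkm_log)]
  · have hk : k ≠ 0 := by rintro rfl; rw [Nat.log_zero_right] at hmk_log; omega
    have hm_lt : m < p ^ (Nat.log p k + 1) :=
      (Nat.lt_pow_succ_log_self hp m).trans_le (Nat.pow_le_pow_right hp.le hmk_log)
    have hmod_lt : m % p ^ Nat.log p m < k :=
      calc m % p ^ Nat.log p m < p ^ Nat.log p m := Nat.mod_lt _ (by positivity)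
        _ ≤ p ^ Nat.log p k := Nat.pow_le_pow_right hp.le (by omega)
        _ ≤ k := Nat.pow_log_le_self p hk
    rw [Nat.mod_eq_of_lt hm_lt,
      Nat.mod_eq_of_lt (hmod_lt.trans_le (Nat.lt_pow_succ_log_self hp k).le)]
    exact iff_of_false hmod_lt.ne (Ne.symm hkm)

theorem vdpChi_natCast_mod_pow_log_self {m : ℕ} (hm : m ≠ 0) :
    vdpChi p m ((m % p ^ Nat.log p m : ℕ) : ℤ_[p]) = 0 := by
  have hp : 1 < p := (Fact.out : p.Prime).one_lt
  have hmod_lt : m % p ^ Nat.log p m < p ^ Nat.log p m := Nat.mod_lt _ (by positivity)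
  rw [vdpChi_natCast, Nat.mod_eq_of_lt (hmod_lt.trans (Nat.pow_lt_pow_right hp (by omega))),
    if_neg (hmod_lt.trans_le (Nat.pow_log_le_self p hm)).ne]

end vdpChi

section VanDerPutSeries

variable {p : ℕ} [Fact p.Prime] {B : ℕ → ℤ_[p]} {f : ℤ_[p] → ℤ_[p]}

theorem lipschitz_of_norm_vdpCoeff_le (hB : ∀ m, ‖B m‖ ≤ (p : ℝ) ^ (-(Nat.log p m : ℤ)))
    (hf : ∀ x, f x = ∑' m, B m * vdpChi p m x) (a b : ℤ_[p]) : ‖f a - f b‖ ≤ ‖a - b‖ := by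
  have hB_zero : Tendsto B atTop (nhds 0) :=
    tendsto_zero_iff_norm_tendsto_zero.2 <|
      squeeze_zero (fun _ => norm_nonneg _) hB tendsto_pow_neg_log_atTop
  rw [hf, hf, ← (summable_mul_of_tendsto_zero hB_zero _).tsum_sub
    (summable_mul_of_tendsto_zero hB_zero _)]
  exact IsUltrametricDist.norm_tsum_le_of_forall_le_of_nonneg (norm_nonneg _)
    fun m => norm_mul_vdpChi_sub_le (hB m) a b

theorem vdpCoeff_eq_sub (hB : Tendsto B atTop (nhds 0))
    (hf : ∀ x, f x = ∑' m, B m * vdpChi p m x) {m : ℕ} (hm : 0 < Nat.log p m) :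
    f m - f ((m % p ^ Nat.log p m : ℕ) : ℤ_[p]) = B m := by
  have hm0 : m ≠ 0 := by rintro rfl; simp at hm
  rw [hf, hf, ← (summable_mul_of_tendsto_zero hB _).tsum_sub (summable_mul_of_tendsto_zero hB _),
    tsum_eq_single m fun k hkm => by rw [vdpChi_natCast_mod_pow_log hkm hm, sub_self],
    vdpChi_self, vdpChi_natCast_mod_pow_log_self hm0, mul_one, mul_zero, sub_zero]

theorem norm_vdpCoeff_le_of_lipschitz (hB : Tendsto B atTop (nhds 0))
    (hf : ∀ x, f x = ∑' m, B m * vdpChi p m x) (hlip : ∀ a b, ‖f a - f b‖ ≤ ‖a - b‖) (m : ℕ) :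
    ‖B m‖ ≤ (p : ℝ) ^ (-(Nat.log p m : ℤ)) := by
  rcases Nat.eq_zero_or_pos (Nat.log p m) with hm | hm
  · simpa [hm] using norm_le_one (B m)
  rw [← vdpCoeff_eq_sub hB hf hm]
  exact (hlip _ _).trans (norm_natCast_sub_mod_pow_le m _)

end VanDerPutSeries

/-- **Compatibility criterion in terms of van der Put coefficients.** A continuous function
`f : ℤ_p → ℤ_p` with van der Put series `f x = Σ' m, B m · χ(m,x)` (with `B m → 0`
p-adically) is 1-Lipschitz (compatible) if and only if `‖B m‖ ≤ p^{-⌊log_p m⌋}` for all `m`;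
equivalently, if and only if `f` can be represented as
`f x = Σ' m, p^{⌊log_p m⌋}·b_m·χ(m,x)` for suitable `b_m ∈ ℤ_p`. -/
theorem vdp_compatibility_criterion
    (p : ℕ) [Fact p.Prime]
    (B : ℕ → ℤ_[p]) (hB : Tendsto B atTop (nhds 0))
    (f : ℤ_[p] → ℤ_[p]) (hf : ∀ x : ℤ_[p], f x = ∑' m : ℕ, B m * vdpChi p m x) :
    ((∀ a b : ℤ_[p], ‖f a - f b‖ ≤ ‖a - b‖) ↔
        ∀ m : ℕ, ‖B m‖ ≤ (p : ℝ) ^ (-(Nat.log p m : ℤ))) ∧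
    ((∀ a b : ℤ_[p], ‖f a - f b‖ ≤ ‖a - b‖) ↔
        ∃ b : ℕ → ℤ_[p], ∀ x : ℤ_[p],
          f x = ∑' m : ℕ, (p : ℤ_[p]) ^ (Nat.log p m) * b m * vdpChi p m x) := by
  have hcoeff : (∀ a b : ℤ_[p], ‖f a - f b‖ ≤ ‖a - b‖) ↔
      ∀ m : ℕ, ‖B m‖ ≤ (p : ℝ) ^ (-(Nat.log p m : ℤ)) :=
    ⟨norm_vdpCoeff_le_of_lipschitz hB hf, fun h => lipschitz_of_norm_vdpCoeff_le h hf⟩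
  refine ⟨hcoeff, fun hlip => ?_, fun ⟨b, hb⟩ => lipschitz_of_norm_vdpCoeff_le (fun m => ?_) hb⟩
  · have hdvd (m : ℕ) : (p : ℤ_[p]) ^ Nat.log p m ∣ B m := by
      rw [← Ideal.mem_span_singleton, ← norm_le_pow_iff_mem_span_pow]
      exact hcoeff.1 hlip m
    choose b hb using hdvd
    exact ⟨b, fun x => (hf x).trans (tsum_congr fun m => by rw [hb m])⟩
  · rw [norm_mul, norm_p_pow]
    exact mul_le_of_le_one_right (by positivity) (norm_le_one _)
end
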